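/- arXiv:2409.09334 — 2 statements merged into one kernel-verified Lean document; each statement's English description precedes it below -/
import Mathlib

section
/- The function Φ_{n,λ}(x) := E_{ℓ∼𝕊^{n-1}}(exp(λ⟨ℓ,x⟩)) is monotone in the norm: for any x, y ∈ ℝⁿ with ‖x‖ ≤ ‖y‖, one has 1 ≤ Φ_{n,λ}(x) ≤ Φ_{n,λ}(y). -/
open MeasureTheory ProbabilityTheory Real
open scoped RealInnerProductSpace

/-- The Averaged Moment Generating Function `Φ_{n,λ}(x) = E_{ℓ∼μS} exp(λ⟨ℓ,x⟩)`,
where `μS` is the (uniform) distribution of `ℓ` on the unit sphere. -/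
noncomputable def amgf {n : ℕ} (μS : Measure (EuclideanSpace ℝ (Fin n))) (lam : ℝ)
    (x : EuclideanSpace ℝ (Fin n)) : ℝ :=
  ∫ l, Real.exp (lam * ⟪l, x⟫) ∂μS

/-- `μS` is the uniform probability measure on the unit sphere of `ℝⁿ`:
it is a probability measure, concentrated on the unit sphere, and invariant
under every rotation (linear isometry) of `ℝⁿ`. -/
def IsUniformOnSphere {n : ℕ} (μS : Measure (EuclideanSpace ℝ (Fin n))) : Prop :=
  IsProbabilityMeasure μS ∧
    μS (Metric.sphere (0 : EuclideanSpace ℝ (Fin n)) 1)ᶜ = 0 ∧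
    ∀ Q : EuclideanSpace ℝ (Fin n) ≃ₗᵢ[ℝ] EuclideanSpace ℝ (Fin n),
      Measure.map Q μS = μS

/-!
Rotation invariance makes `Φ` radial; invariance under `x ↦ -x` then turns the integrand
`exp (λ⟨ℓ, x⟩)` into `cosh (λ⟨ℓ, x⟩)`. Shrinking `x` shrinks `|λ⟨ℓ, x⟩|` pointwise, and `cosh`
is increasing in the absolute value, so `Φ` is monotone in `‖x‖`, with `Φ(0) = 1` as minimum.
-/

section InnerProductSpace

variable {E : Type*} [NormedAddCommGroup E] [InnerProductSpace ℝ E] [MeasurableSpace E]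
  [OpensMeasurableSpace E] {μ : Measure E}

theorem integrable_comp_inner_of_ae_norm_eq_one [IsFiniteMeasure μ]
    (hμ : ∀ᵐ l ∂μ, ‖l‖ = 1) {f : ℝ → ℝ} (hf : Continuous f) (x : E) :
    Integrable (fun l => f ⟪l, x⟫) μ := by
  obtain ⟨C, hC⟩ := (isCompact_Icc (a := -‖x‖) (b := ‖x‖)).exists_bound_of_continuousOn
    hf.continuousOn
  refine .of_bound (hf.comp (continuous_id.inner continuous_const)).aestronglyMeasurable C ?_
  filter_upwards [hμ] with l hl
  refine hC _ (abs_le.mp ?_)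
  simpa [hl] using abs_real_inner_le_norm l x

end InnerProductSpace

variable {n : ℕ} {μS : Measure (EuclideanSpace ℝ (Fin n))}

theorem IsUniformOnSphere.ae_norm_eq_one (hμS : IsUniformOnSphere μS) : ∀ᵐ l ∂μS, ‖l‖ = 1 := by
  rw [ae_iff]
  convert hμS.2.1 using 2
  ext l
  simp

theorem IsUniformOnSphere.integrable_comp_inner (hμS : IsUniformOnSphere μS) {f : ℝ → ℝ}
    (hf : Continuous f) (x : EuclideanSpace ℝ (Fin n)) :
    Integrable (fun l => f ⟪l, x⟫) μS :=
  haveI := hμS.1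
  integrable_comp_inner_of_ae_norm_eq_one hμS.ae_norm_eq_one hf x

theorem amgf_zero [IsProbabilityMeasure μS] (lam : ℝ) : amgf μS lam 0 = 1 := by
  simp [amgf]

theorem amgf_linearIsometryEquiv (hrot : ∀ Q : EuclideanSpace ℝ (Fin n) ≃ₗᵢ[ℝ] _,
      Measure.map Q μS = μS) (lam : ℝ) (Q : EuclideanSpace ℝ (Fin n) ≃ₗᵢ[ℝ] _)
    (x : EuclideanSpace ℝ (Fin n)) : amgf μS lam (Q x) = amgf μS lam x := by
  conv_rhs => rw [amgf, ← hrot Q.symm]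
  rw [integral_map (f := fun l => exp (lam * ⟪l, x⟫)) Q.symm.continuous.aemeasurable
    (continuous_const.mul (continuous_id.inner continuous_const)).rexp.aestronglyMeasurable]
  simp_rw [← Q.inner_map_map (Q.symm _), Q.apply_symm_apply]
  rfl

theorem amgf_eq_of_norm_eq (hrot : ∀ Q : EuclideanSpace ℝ (Fin n) ≃ₗᵢ[ℝ] _,
      Measure.map Q μS = μS) (lam : ℝ) {x y : EuclideanSpace ℝ (Fin n)} (hxy : ‖x‖ = ‖y‖) :
    amgf μS lam x = amgf μS lam y := by
  rw [← amgf_linearIsometryEquiv hrot lam _ x, Submodule.reflection_sub hxy]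

theorem amgf_eq_integral_cosh (hμS : IsUniformOnSphere μS) (lam : ℝ)
    (x : EuclideanSpace ℝ (Fin n)) : amgf μS lam x = ∫ l, cosh (lam * ⟪l, x⟫) ∂μS := by
  have hexp (c : ℝ) : Integrable (fun l => exp (c * ⟪l, x⟫)) μS :=
    hμS.integrable_comp_inner (continuous_const_mul c).rexp x
  have hneg : amgf μS lam x = ∫ l, exp (-lam * ⟪l, x⟫) ∂μS := by
    rw [← amgf_eq_of_norm_eq hμS.2.2 lam (norm_neg x), amgf]
    simp_rw [inner_neg_right, neg_mul, mul_neg]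
  calc amgf μS lam x = (amgf μS lam x + amgf μS lam x) / 2 := by ring
    _ = ∫ l, (exp (lam * ⟪l, x⟫) + exp (-lam * ⟪l, x⟫)) / 2 ∂μS := by
        rw [integral_div, integral_add (hexp lam) (hexp (-lam)), ← hneg, amgf]
    _ = ∫ l, cosh (lam * ⟪l, x⟫) ∂μS := by simp_rw [cosh_eq, neg_mul]

theorem amgf_smul_le (hμS : IsUniformOnSphere μS) (lam : ℝ) {c : ℝ} (hc : |c| ≤ 1)
    (x : EuclideanSpace ℝ (Fin n)) : amgf μS lam (c • x) ≤ amgf μS lam x := by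
  have hcosh (x : EuclideanSpace ℝ (Fin n)) :
      Integrable (fun l => cosh (lam * ⟪l, x⟫)) μS :=
    hμS.integrable_comp_inner (continuous_cosh.comp (continuous_const_mul lam)) x
  rw [amgf_eq_integral_cosh hμS, amgf_eq_integral_cosh hμS]
  refine integral_mono (hcosh _) (hcosh x) fun l => cosh_le_cosh.mpr ?_
  rw [real_inner_smul_right, mul_left_comm, abs_mul c]
  exact mul_le_of_le_one_left (abs_nonneg _) hc

theorem amgf_le_amgf_of_norm_le (hμS : IsUniformOnSphere μS) (lam : ℝ)
    {x y : EuclideanSpace ℝ (Fin n)} (hxy : ‖x‖ ≤ ‖y‖) : amgf μS lam x ≤ amgf μS lam y := by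
  set c := ‖x‖ / ‖y‖
  have hc : |c| ≤ 1 := by
    rw [abs_of_nonneg (by positivity)]
    exact div_le_one_of_le₀ hxy (norm_nonneg y)
  have hnorm : ‖x‖ = ‖c • y‖ := by
    rcases (norm_nonneg y).eq_or_lt with hy | hy
    · simp [c, ← hy, le_antisymm (hy ▸ hxy) (norm_nonneg x)]
    · rw [norm_smul, norm_div, norm_norm, norm_norm, div_mul_cancel₀ _ hy.ne']
  rw [amgf_eq_of_norm_eq hμS.2.2 lam hnorm]
  exact amgf_smul_le hμS lam hc y

/-- monotonicity of the AMGF in the norm: if ‖x‖ ≤ ‖y‖ then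
`1 ≤ Φ_{n,λ}(x) ≤ Φ_{n,λ}(y)`. -/
theorem amgf_monotone {n : ℕ}
    (μS : Measure (EuclideanSpace ℝ (Fin n))) (hμS : IsUniformOnSphere μS)
    (lam : ℝ) (x y : EuclideanSpace ℝ (Fin n)) (hxy : ‖x‖ ≤ ‖y‖) :
    1 ≤ amgf μS lam x ∧ amgf μS lam x ≤ amgf μS lam y := by
  have := hμS.1
  refine ⟨?_, amgf_le_amgf_of_norm_le hμS lam hxy⟩
  rw [← amgf_zero (μS := μS) lam]
  exact amgf_le_amgf_of_norm_le hμS lam (by simp)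
end

section
/- (Expectation bound on stochastic deviation) Let X_{t+1}=f(X_t,u_t,t)+w_t and x_{t+1}=f(x_t,u_t,t) with X_0 = x_0, where for each t, ‖f(x,u,t)−f(y,u,t)‖ ≤ L_t ‖x−y‖ for all x,y,u, and w_t ∈ ℝⁿ is independent of X_t, has zero mean, and each coordinate has variance at most σ_t². Then E(‖X_t − x_t‖²) ≤ n Ψ_t, where Ψ_t = ψ_{t-1} ∑_{k=0}^{t-1} σ_k² ψ_k^{-1} and ψ_t = ∏_{k=0}^{t} L_k². -/
open MeasureTheory ProbabilityTheory Real
open scoped RealInnerProductSpace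

/-!
The deviation `e_{t+1} = X_{t+1} - x_{t+1}` splits as `(f(X_t) - f(x_t)) + w_t`. The first summand
is a function of `X_t`, hence independent of the centred noise `w_t`, so the cross term vanishes in
expectation and `E‖e_{t+1}‖² = E‖f(X_t) - f(x_t)‖² + E‖w_t‖² ≤ L_t² E‖e_t‖² + n σ_t²`.
Since `e_0 = 0`, the discrete Grönwall inequality for this recursion gives the bound `n Ψ_t`.
-/

open Finset in
theorem le_prod_mul_sum_div_prod_of_le_mul_add {D a b : ℕ → ℝ} (ha : ∀ k, 0 < a k)
    (hD0 : D 0 ≤ 0) (hD : ∀ k, D (k + 1) ≤ a k * D k + b k) (t : ℕ) :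
    D t ≤ (∏ k ∈ range t, a k) * ∑ k ∈ range t, b k / ∏ j ∈ range (k + 1), a j := by
  have hgronwall := discrete_gronwall_prod_general (n₀ := 0) (fun k _ => hD k)
    (fun k _ => (ha k).le) (Nat.zero_le t)
  have hsplit (k : ℕ) (hk : k ∈ range t) :
      b k * ∏ i ∈ Ico (k + 1) t, a i = (∏ i ∈ range t, a i) * (b k / ∏ j ∈ range (k + 1), a j) := by
    rw [← prod_range_mul_prod_Ico a (mem_range.1 hk : k + 1 ≤ t)]
    field_simp [(prod_pos fun j _ => ha j).ne']
  rw [← range_eq_Ico, sum_congr rfl hsplit, ← mul_sum] at hgronwall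
  linarith [mul_nonpos_of_nonpos_of_nonneg hD0 (prod_nonneg (s := range t) fun k _ => (ha k).le)]

section

variable {Ω E F : Type*} [MeasurableSpace Ω] {μ : Measure Ω}

theorem memLp_comp_sub_of_norm_sub_le [NormedAddCommGroup E] [NormedAddCommGroup F]
    {p : ENNReal} {Y : Ω → E} {g : E → F} {c : E} {L : ℝ}
    (hg : ∀ y y', ‖g y - g y'‖ ≤ L * ‖y - y'‖)
    (hgY : AEStronglyMeasurable (fun ω => g (Y ω) - g c) μ)
    (hY : MemLp (fun ω => Y ω - c) p μ) :
    MemLp (fun ω => g (Y ω) - g c) p μ :=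
  hY.of_le_mul hgY (.of_forall fun ω => by simpa only [Real.norm_eq_abs] using hg (Y ω) c)

theorem integral_norm_comp_sub_sq_le [NormedAddCommGroup E] [NormedAddCommGroup F]
    {Y : Ω → E} {g : E → F} {c : E} {L : ℝ}
    (hg : ∀ y y', ‖g y - g y'‖ ≤ L * ‖y - y'‖)
    (hY : Integrable (fun ω => ‖Y ω - c‖ ^ 2) μ) :
    ∫ ω, ‖g (Y ω) - g c‖ ^ 2 ∂μ ≤ L ^ 2 * ∫ ω, ‖Y ω - c‖ ^ 2 ∂μ := by
  rw [← integral_const_mul]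
  refine integral_mono_of_nonneg (.of_forall fun ω => by positivity) (hY.const_mul _)
    (.of_forall fun ω => ?_)
  calc ‖g (Y ω) - g c‖ ^ 2 ≤ (L * ‖Y ω - c‖) ^ 2 := by gcongr; exact hg _ _
    _ = L ^ 2 * ‖Y ω - c‖ ^ 2 := by ring

theorem ProbabilityTheory.IndepFun.integral_norm_add_sq [NormedAddCommGroup E]
    [InnerProductSpace ℝ E] [CompleteSpace E] [MeasurableSpace E] [BorelSpace E]
    [IsFiniteMeasure μ] {A W : Ω → E}
    (hAW : A ⟂ᵢ[μ] W) (hA : MemLp A 2 μ) (hW : MemLp W 2 μ) (hW0 : μ[W] = 0) :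
    ∫ ω, ‖A ω + W ω‖ ^ 2 ∂μ = ∫ ω, ‖A ω‖ ^ 2 ∂μ + ∫ ω, ‖W ω‖ ^ 2 ∂μ := by
  have hA1 := hA.integrable one_le_two
  have hW1 := hW.integrable one_le_two
  have hcross : ∫ ω, ⟪A ω, W ω⟫ ∂μ = 0 :=
    (hAW.integral_bilin hA1 hW1 (innerSL ℝ)).trans (by rw [hW0, map_zero])
  have hinner : Integrable (fun ω => 2 * ⟪A ω, W ω⟫) μ :=
    (hAW.integrable_bilin hA1 hW1 (innerSL ℝ)).const_mul 2
  simp_rw [norm_add_sq_real]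
  have hA2 := hA.integrable_norm_pow two_ne_zero
  rw [integral_add (f := fun ω => ‖A ω‖ ^ 2 + 2 * ⟪A ω, W ω⟫) (hA2.add hinner)
      (hW.integrable_norm_pow two_ne_zero),
    integral_add hA2 hinner, integral_const_mul, hcross, mul_zero, add_zero]

theorem EuclideanSpace.integral_norm_sq_eq_sum_variance [IsFiniteMeasure μ] {ι : Type*}
    [Fintype ι] {W : Ω → EuclideanSpace ℝ ι} (hW : ∀ i, MemLp (W · i) 2 μ) (hW0 : μ[W] = 0) :
    ∫ ω, ‖W ω‖ ^ 2 ∂μ = ∑ i, Var[(W · i); μ] := by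
  have hcoord_mean (i : ι) : ∫ ω, W ω i ∂μ = 0 := by
    rw [← eval_integral_piLp (fun i => (hW i).integrable one_le_two), hW0]; rfl
  simp_rw [EuclideanSpace.real_norm_sq_eq]
  rw [integral_finsetSum _ fun i _ => (hW i).integrable_sq]
  exact Finset.sum_congr rfl fun i _ =>
    (variance_of_integral_eq_zero (hW i).aemeasurable (hcoord_mean i)).symm

end

theorem expectation_bound_stochastic_deviation_general
    {Ω : Type*} [MeasurableSpace Ω] (μ : Measure Ω) [IsProbabilityMeasure μ]
    {n : ℕ} {U : Type*}
    (f : EuclideanSpace ℝ (Fin n) → U → ℕ → EuclideanSpace ℝ (Fin n))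
    (u : ℕ → U) (L σ : ℕ → ℝ)
    (hL : ∀ t, 0 < L t)
    (hf : ∀ (t : ℕ) (v : U) (x y : EuclideanSpace ℝ (Fin n)),
      ‖f x v t - f y v t‖ ≤ L t * ‖x - y‖)
    (hfm : ∀ t, Measurable (fun x => f x (u t) t))
    (X : ℕ → Ω → EuclideanSpace ℝ (Fin n))
    (x : ℕ → EuclideanSpace ℝ (Fin n))
    (w : ℕ → Ω → EuclideanSpace ℝ (Fin n))
    (hX0 : ∀ ω, X 0 ω = x 0)
    (hXdyn : ∀ t ω, X (t + 1) ω = f (X t ω) (u t) t + w t ω)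
    (hxdyn : ∀ t, x (t + 1) = f (x t) (u t) t)
    (hXm : ∀ t, Measurable (X t))
    (hindep : ∀ t, IndepFun (w t) (X t) μ)
    (hwmean : ∀ t, (∫ ω, w t ω ∂μ) = 0)
    (hwsq : ∀ t (i : Fin n), MemLp (fun ω => w t ω i) 2 μ)
    (hwvar : ∀ t (i : Fin n), variance (fun ω => w t ω i) μ ≤ σ t ^ 2) :
    ∀ t : ℕ, (∫ ω, ‖X t ω - x t‖ ^ 2 ∂μ) ≤
      n * ((∏ k ∈ Finset.range t, L k ^ 2) *
        ∑ k ∈ Finset.range t, σ k ^ 2 / ∏ j ∈ Finset.range (k + 1), L j ^ 2) := by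
  set A : ℕ → Ω → EuclideanSpace ℝ (Fin n) :=
    fun t ω => f (X t ω) (u t) t - f (x t) (u t) t
  have hdev (t : ℕ) (ω : Ω) : X (t + 1) ω - x (t + 1) = A t ω + w t ω := by
    rw [hXdyn, hxdyn, add_sub_right_comm]
  have hAm (t : ℕ) : AEStronglyMeasurable (A t) μ :=
    ((hfm t).comp (hXm t)).sub_const _ |>.aestronglyMeasurable
  have hw (t : ℕ) : MemLp (w t) 2 μ := memLp_piLp_iff.2 (hwsq t)
  have hdevL2 (t : ℕ) : MemLp (fun ω => X t ω - x t) 2 μ := by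
    induction t with
    | zero => simp [hX0]
    | succ t ih =>
      simp_rw [hdev]
      exact (memLp_comp_sub_of_norm_sub_le (hf t (u t)) (hAm t) ih).add (hw t)
  have hnoise (t : ℕ) : ∫ ω, ‖w t ω‖ ^ 2 ∂μ ≤ n * σ t ^ 2 := by
    rw [EuclideanSpace.integral_norm_sq_eq_sum_variance (hwsq t) (hwmean t)]
    simpa using Finset.sum_le_sum fun i (_ : i ∈ Finset.univ) => hwvar t i
  have hstep (t : ℕ) : ∫ ω, ‖X (t + 1) ω - x (t + 1)‖ ^ 2 ∂μ ≤
      L t ^ 2 * ∫ ω, ‖X t ω - x t‖ ^ 2 ∂μ + n * σ t ^ 2 := by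
    have hAw : A t ⟂ᵢ[μ] w t := (hindep t).symm.comp ((hfm t).sub_const _) measurable_id
    simp_rw [hdev]
    rw [hAw.integral_norm_add_sq
        (memLp_comp_sub_of_norm_sub_le (hf t (u t)) (hAm t) (hdevL2 t)) (hw t) (hwmean t)]
    exact add_le_add (integral_norm_comp_sub_sq_le (hf t (u t))
      ((hdevL2 t).integrable_norm_pow two_ne_zero)) (hnoise t)
  intro t
  have hgronwall := le_prod_mul_sum_div_prod_of_le_mul_add (D := fun t => ∫ ω, ‖X t ω - x t‖ ^ 2 ∂μ)
    (fun k => pow_pos (hL k) 2) (by simp [hX0]) hstep t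
  simpa only [Finset.mul_sum, mul_div_assoc, mul_left_comm] using hgronwall

/-- expectation bound on stochastic deviation: for the stochastic
system `X_{t+1} = f(X_t,u_t,t) + w_t` and its associated deterministic system
`x_{t+1} = f(x_t,u_t,t)` with `X_0 = x_0`, where `f(·,u,t)` is `L_t`-Lipschitz,
and `w_t` is independent of `X_t`, has mean zero and coordinate variances at most
`σ_t²`, one has `E ‖X_t - x_t‖² ≤ n Ψ_t` with
`Ψ_t = ψ_{t-1} ∑_{k<t} σ_k² ψ_k⁻¹`, `ψ_t = ∏_{k≤t} L_k²`. -/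
theorem expectation_bound_stochastic_deviation
    {Ω : Type*} [MeasurableSpace Ω] (μ : Measure Ω) [IsProbabilityMeasure μ]
    {n : ℕ} {U : Type*}
    (f : EuclideanSpace ℝ (Fin n) → U → ℕ → EuclideanSpace ℝ (Fin n))
    (u : ℕ → U) (L σ : ℕ → ℝ)
    (hL : ∀ t, 0 < L t) (hσ : ∀ t, 0 ≤ σ t)
    (hf : ∀ (t : ℕ) (v : U) (x y : EuclideanSpace ℝ (Fin n)),
      ‖f x v t - f y v t‖ ≤ L t * ‖x - y‖)
    (hfm : ∀ t, Measurable (fun x => f x (u t) t))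
    (X : ℕ → Ω → EuclideanSpace ℝ (Fin n))
    (x : ℕ → EuclideanSpace ℝ (Fin n))
    (w : ℕ → Ω → EuclideanSpace ℝ (Fin n))
    (hX0 : ∀ ω, X 0 ω = x 0)
    (hXdyn : ∀ t ω, X (t + 1) ω = f (X t ω) (u t) t + w t ω)
    (hxdyn : ∀ t, x (t + 1) = f (x t) (u t) t)
    (hXm : ∀ t, Measurable (X t)) (hwm : ∀ t, Measurable (w t))
    (hindep : ∀ t, IndepFun (w t) (X t) μ)
    (hwint : ∀ t, Integrable (w t) μ)
    (hwmean : ∀ t, (∫ ω, w t ω ∂μ) = 0)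
    (hwsq : ∀ t (i : Fin n), MemLp (fun ω => w t ω i) 2 μ)
    (hwvar : ∀ t (i : Fin n), variance (fun ω => w t ω i) μ ≤ σ t ^ 2) :
    ∀ t : ℕ, (∫ ω, ‖X t ω - x t‖ ^ 2 ∂μ) ≤
      n * ((∏ k ∈ Finset.range t, L k ^ 2) *
        ∑ k ∈ Finset.range t, σ k ^ 2 / ∏ j ∈ Finset.range (k + 1), L j ^ 2) :=
  expectation_bound_stochastic_deviation_general μ f u L σ hL hf hfm X x w hX0 hXdyn hxdyn hXm
    hindep hwmean hwsq hwvar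
end
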